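/- If b(x)/x → +∞ as x → 0⁺, then β·C(β) → 0 as β → 0⁺. -/

import Mathlib

/-! If `M x ≤ b x` near `0`, then for small `β` the inner integral is at least
`∫₀ˣ c y/(1-y) dy = -c log(1-x) - c x` with `c = M a β`, so the integrand of `C(β)` is
at most `eᶜ (1-x)^(c-1)` and `C(β) ≤ eᶜ/c`. Hence `β C(β) ≤ e^(M a β)/(M a) → 1/(M a)`,
and `M` is arbitrary. -/

open MeasureTheory Real Filter Set

/-- `C(β) = ∫₀¹ (1-x)⁻¹ exp(-∫₀ˣ b(aβy)/(1-y) dy) dx`. -/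
noncomputable def Cfun (a : ℝ) (b : ℝ → ℝ) (β : ℝ) : ℝ :=
  ∫ x in (0:ℝ)..1, (1 - x)⁻¹ * Real.exp (-∫ y in (0:ℝ)..x, b (a * β * y) / (1 - y))

lemma integral_inv_one_sub {x : ℝ} (hx : x < 1) :
    ∫ y in (0:ℝ)..x, (1 - y)⁻¹ = -log (1 - x) := by
  rw [intervalIntegral.integral_comp_sub_left (fun y => y⁻¹), sub_zero,
    integral_inv (by rw [mem_uIcc]; rintro (⟨h, -⟩ | ⟨h, -⟩) <;> linarith),
    log_div one_ne_zero (by linarith), log_one, zero_sub]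

lemma intervalIntegrable_div_one_sub {g : ℝ → ℝ} {x : ℝ} (hg : ContinuousOn g (Icc 0 x))
    (hx₀ : 0 ≤ x) (hx : x < 1) : IntervalIntegrable (fun y => g y / (1 - y)) volume 0 x :=
  (hg.div (by fun_prop) fun y hy => by linarith [hy.2]).intervalIntegrable_of_Icc hx₀

lemma integral_mul_div_one_sub (c : ℝ) {x : ℝ} (hx₀ : 0 ≤ x) (hx : x < 1) :
    ∫ y in (0:ℝ)..x, c * y / (1 - y) = -c * log (1 - x) - c * x := by
  have hsplit :
      EqOn (fun y : ℝ => c * y / (1 - y)) (fun y => c * (1 - y)⁻¹ - c) (uIcc 0 x) := by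
    intro y hy
    rw [uIcc_of_le hx₀] at hy
    have : 1 - y ≠ 0 := by linarith [hy.2]
    field_simp
    ring
  have hinv : IntervalIntegrable (fun y : ℝ => (1 - y)⁻¹) volume 0 x := by
    simpa using intervalIntegrable_div_one_sub (g := fun _ => 1) continuousOn_const hx₀ hx
  rw [intervalIntegral.integral_congr hsplit, intervalIntegral.integral_sub (hinv.const_mul c)
    intervalIntegrable_const, intervalIntegral.integral_const_mul, integral_inv_one_sub hx,
    intervalIntegral.integral_const, sub_zero, smul_eq_mul]
  ring

lemma inv_one_sub_mul_exp_neg_integral_le {g : ℝ → ℝ} {c x : ℝ} (hc : 0 ≤ c)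
    (hg : ContinuousOn g (Icc 0 1)) (hgc : ∀ y ∈ Icc 0 1, c * y ≤ g y) (hx : x ∈ Ico 0 1) :
    (1 - x)⁻¹ * exp (-∫ y in (0:ℝ)..x, g y / (1 - y)) ≤ exp c * (1 - x) ^ (c - 1) := by
  obtain ⟨hx₀, hx₁⟩ := hx
  have hpos : 0 < 1 - x := by linarith
  have hIcc : Icc 0 x ⊆ Icc (0:ℝ) 1 := Icc_subset_Icc_right hx₁.le
  have hinner : -c * log (1 - x) - c * x ≤ ∫ y in (0:ℝ)..x, g y / (1 - y) := by
    rw [← integral_mul_div_one_sub c hx₀ hx₁]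
    refine intervalIntegral.integral_mono_on hx₀
      (intervalIntegrable_div_one_sub (by fun_prop) hx₀ hx₁)
      (intervalIntegrable_div_one_sub (hg.mono hIcc) hx₀ hx₁) fun y hy => ?_
    have : 0 < 1 - y := by linarith [hy.2]
    gcongr
    exact hgc y (hIcc hy)
  calc (1 - x)⁻¹ * exp (-∫ y in (0:ℝ)..x, g y / (1 - y))
      ≤ (1 - x)⁻¹ * exp (log (1 - x) * c + c * x) := by gcongr; linarith
    _ = (1 - x) ^ (c - 1) * exp (c * x) := by
      rw [exp_add, ← rpow_def_of_pos hpos, rpow_sub hpos, rpow_one]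
      ring
    _ ≤ exp c * (1 - x) ^ (c - 1) := by
      rw [mul_comm]
      gcongr
      nlinarith

lemma intervalIntegrable_one_sub_rpow {r : ℝ} (hr : -1 < r) :
    IntervalIntegrable (fun x : ℝ => (1 - x) ^ r) volume 0 1 := by
  simpa using
    ((intervalIntegral.intervalIntegrable_rpow' (a := 0) (b := 1) hr).comp_sub_left 1).symm

lemma integral_one_sub_rpow {r : ℝ} (hr : -1 < r) :
    ∫ x in (0:ℝ)..1, (1 - x) ^ r = 1 / (r + 1) := by
  rw [intervalIntegral.integral_comp_sub_left (fun x => x ^ r), sub_self, sub_zero,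
    integral_rpow (Or.inl hr), one_rpow, zero_rpow (by linarith)]
  ring

lemma inv_one_sub_mul_exp_nonneg {x : ℝ} (hx : x ≤ 1) (t : ℝ) : 0 ≤ (1 - x)⁻¹ * exp t :=
  mul_nonneg (inv_nonneg.2 (sub_nonneg.2 hx)) (exp_pos t).le

lemma integral_inv_one_sub_mul_exp_neg_integral_le {g : ℝ → ℝ} {c : ℝ} (hc : 0 < c)
    (hg : ContinuousOn g (Icc 0 1)) (hgc : ∀ y ∈ Icc 0 1, c * y ≤ g y) :
    ∫ x in (0:ℝ)..1, (1 - x)⁻¹ * exp (-∫ y in (0:ℝ)..x, g y / (1 - y)) ≤ exp c / c := by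
  have hr : -1 < c - 1 := by linarith
  rw [intervalIntegral.integral_of_le zero_le_one, integral_Ioc_eq_integral_Ioo]
  calc _ ≤ ∫ x in Ioo 0 1, exp c * (1 - x) ^ (c - 1) := by
        refine integral_mono_of_nonneg ?_ ?_ ?_
        · filter_upwards [self_mem_ae_restrict measurableSet_Ioo] with x hx
          exact inv_one_sub_mul_exp_nonneg hx.2.le _
        · exact ((intervalIntegrable_one_sub_rpow hr).1.mono_set
            Ioo_subset_Ioc_self).const_mul _
        · filter_upwards [self_mem_ae_restrict measurableSet_Ioo] with x hx
          exact inv_one_sub_mul_exp_neg_integral_le hc.le hg hgc ⟨hx.1.le, hx.2⟩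
    _ = exp c / c := by
      rw [← integral_Ioc_eq_integral_Ioo, ← intervalIntegral.integral_of_le zero_le_one,
        intervalIntegral.integral_const_mul, integral_one_sub_rpow hr, sub_add_cancel]
      ring

lemma Cfun_nonneg (a : ℝ) (b : ℝ → ℝ) (β : ℝ) : 0 ≤ Cfun a b β :=
  intervalIntegral.integral_nonneg zero_le_one fun _ hx => inv_one_sub_mul_exp_nonneg hx.2 _

lemma exists_mul_le_of_tendsto_div_atTop {b : ℝ → ℝ} (hb0 : 0 ≤ b 0)
    (hslope : Tendsto (fun x => b x / x) (nhdsWithin 0 (Ioi 0)) atTop) (M : ℝ) :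
    ∃ δ > 0, ∀ x ∈ Ico 0 δ, M * x ≤ b x := by
  obtain ⟨δ, hδ, hsub⟩ := mem_nhdsGT_iff_exists_Ioo_subset.1 (hslope.eventually_ge_atTop M)
  refine ⟨δ, hδ, fun x hx => ?_⟩
  rcases hx.1.eq_or_lt with rfl | hx₀
  · simpa using hb0
  · exact (le_div_iff₀ hx₀).1 (hsub ⟨hx₀, hx.2⟩)

theorem betaC_tendsto_zero_of_slope_infinite_general
    (a : ℝ) (ha : 0 < a) (b : ℝ → ℝ)
    (hb_cont : Continuous b)
    (hb0 : 0 ≤ b 0)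
    (hslope : Tendsto (fun x => b x / x) (nhdsWithin 0 (Set.Ioi 0)) atTop) :
    Tendsto (fun β => β * Cfun a b β) (nhdsWithin 0 (Set.Ioi 0)) (nhds 0) := by
  refine tendsto_order.2 ⟨fun ε hε => eventually_nhdsWithin_of_forall fun β hβ =>
    hε.trans_le (mul_nonneg (le_of_lt hβ) (Cfun_nonneg a b β)), fun ε hε => ?_⟩
  set M := 2 / (a * ε)
  have hMa : 0 < M * a := by positivity
  obtain ⟨δ, hδ, hbδ⟩ := exists_mul_le_of_tendsto_div_atTop hb0 hslope M
  have hsmall : Tendsto (fun β => a * β) (nhdsWithin 0 (Ioi 0)) (nhds 0) := by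
    simpa using ((continuous_const_mul a).tendsto 0).mono_left nhdsWithin_le_nhds
  have hlim : Tendsto (fun β => exp (M * a * β) / (M * a)) (nhdsWithin 0 (Ioi 0))
      (nhds (ε / 2)) := by
    have : M * a = 2 / ε := by simp only [M]; field_simp
    simpa [this] using ((by fun_prop : Continuous fun β => exp (M * a * β) / (M * a)).tendsto
      0).mono_left nhdsWithin_le_nhds
  filter_upwards [self_mem_nhdsWithin, hsmall.eventually (eventually_lt_nhds hδ),
    hlim.eventually (eventually_lt_nhds (half_lt_self hε))] with β (hβ : 0 < β) hβδ hlt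
  have hbound : ∀ y ∈ Icc (0:ℝ) 1, M * a * β * y ≤ b (a * β * y) := fun y hy => by
    have hy' : a * β * y ≤ a * β := mul_le_of_le_one_right (by positivity) hy.2
    have := hbδ (a * β * y) ⟨by have := hy.1; positivity, hy'.trans_lt hβδ⟩
    linarith
  calc β * Cfun a b β ≤ β * (exp (M * a * β) / (M * a * β)) :=
        mul_le_mul_of_nonneg_left (integral_inv_one_sub_mul_exp_neg_integral_le
          (by positivity) (by fun_prop) hbound) hβ.le
    _ = exp (M * a * β) / (M * a) := by field_simp
    _ < ε := hlt

/-- if `b(x)/x → ∞` as `x → 0⁺`, then `β C(β) → 0` as `β → 0⁺`. -/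
theorem betaC_tendsto_zero_of_slope_infinite
    (a : ℝ) (ha : 0 < a) (b : ℝ → ℝ)
    (hb_cont : Continuous b) (hb_mono : MonotoneOn b (Set.Ici 0))
    (hb0 : 0 ≤ b 0) (hb_pos : ∀ x > (0:ℝ), 0 < b x)
    (hslope : Tendsto (fun x => b x / x) (nhdsWithin 0 (Set.Ioi 0)) atTop) :
    Tendsto (fun β => β * Cfun a b β) (nhdsWithin 0 (Set.Ioi 0)) (nhds 0) :=
  betaC_tendsto_zero_of_slope_infinite_general a ha b hb_cont hb0 hslope
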